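/- arXiv:2002.00409 — 7 statements merged into one kernel-verified Lean document; each statement's English description precedes it below -/
import Mathlib

section
/- Let M be a proper metric space. Every ℝ-soft compactification is M-soft. -/
open Set Filter Topology

universe u u₁ u₂ v w

section CoarsePreamble

variable {X : Type u}

/-- An entourage on `X` is a subset of `X × X` containing the diagonal. -/
def IsEntourage (E : Set (X × X)) : Prop := ∀ x : X, (x, x) ∈ E

/-- Composition `E ∘ F` of two entourages. -/
def entComp (E F : Set (X × X)) : Set (X × X) :=
  {p | ∃ y : X, (p.1, y) ∈ E ∧ (y, p.2) ∈ F}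

/-- Inverse `E⁻¹` of an entourage. -/
def entInv (E : Set (X × X)) : Set (X × X) := {p | (p.2, p.1) ∈ E}

/-- The `E`-ball `E[x]` centered at `x`. -/
def entBall (E : Set (X × X)) (x : X) : Set X := {y | (x, y) ∈ E}

/-- A coarse structure on `X`: a family of entourages covering `X × X`, closed under
`E ∘ F⁻¹` up to enlargement, and downward closed among entourages. -/
structure IsCoarseStructure (𝓔 : Set (Set (X × X))) : Prop where
  ent : ∀ E ∈ 𝓔, IsEntourage E
  cover : ∀ p : X × X, ∃ E ∈ 𝓔, p ∈ E
  comp_subset : ∀ E ∈ 𝓔, ∀ F ∈ 𝓔, ∃ G ∈ 𝓔, entComp E (entInv F) ⊆ G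
  downward : ∀ E F : Set (X × X), IsEntourage E → E ⊆ F → F ∈ 𝓔 → E ∈ 𝓔

/-- A set `B` is bounded in the coarse space `(X, 𝓔)` if `B ⊆ E[x]` for some `E ∈ 𝓔`, `x ∈ X`. -/
def IsBoundedSet (𝓔 : Set (Set (X × X))) (B : Set X) : Prop :=
  ∃ E ∈ 𝓔, ∃ x : X, B ⊆ entBall E x

/-- A coarse structure is finitary if the cardinalities of balls of each entourage
are uniformly finite. -/
def IsFinitaryCoarse (𝓔 : Set (Set (X × X))) : Prop :=
  ∀ E ∈ 𝓔, ∃ n : ℕ, ∀ x : X, (entBall E x).Finite ∧ (entBall E x).ncard ≤ n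

/-- `d : X → X → ℝ` is a metric. -/
structure IsMetricOn (d : X → X → ℝ) : Prop where
  refl : ∀ x, d x x = 0
  eq_of : ∀ x y, d x y = 0 → x = y
  symm : ∀ x y, d x y = d y x
  triangle : ∀ x y z, d x z ≤ d x y + d y z

/-- A coarse structure is metrizable if it is the coarse structure of some metric on `X`,
i.e. consists of all entourages of uniformly bounded `d`-diameter. -/
def IsMetrizableCoarse (𝓔 : Set (Set (X × X))) : Prop :=
  ∃ d : X → X → ℝ, IsMetricOn d ∧
    𝓔 = {E | IsEntourage E ∧ ∃ n : ℕ, ∀ p ∈ E, d p.1 p.2 ≤ (n : ℝ)}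

/-- A cellular entourage: a symmetric and transitive entourage (an equivalence relation). -/
def IsCellularEnt (E : Set (X × X)) : Prop :=
  (∀ p : X × X, p ∈ E → (p.2, p.1) ∈ E) ∧
    ∀ x y z : X, (x, y) ∈ E → (y, z) ∈ E → (x, z) ∈ E

/-- `𝓑` is a base of the coarse structure `𝓔`. -/
def IsCoarseBase (𝓔 𝓑 : Set (Set (X × X))) : Prop :=
  𝓑 ⊆ 𝓔 ∧ ∀ E ∈ 𝓔, ∃ B ∈ 𝓑, E ⊆ B

/-- A coarse structure is cellular if it has a base of cellular entourages. -/
def IsCellularCoarse (𝓔 : Set (Set (X × X))) : Prop :=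
  ∃ 𝓑 : Set (Set (X × X)), IsCoarseBase 𝓔 𝓑 ∧ ∀ B ∈ 𝓑, IsCellularEnt B

/-- A subset `D` is `𝓔`-discrete (thin). -/
def IsCoarseDiscrete (𝓔 : Set (Set (X × X))) (D : Set X) : Prop :=
  ∀ E ∈ 𝓔, ∃ B : Set X, IsBoundedSet 𝓔 B ∧ ∀ x ∈ D \ B, D ∩ entBall E x = {x}

/-- The basic entourage `E_F` determined by a set `F` of permutations of `X`. -/
def permEnt (F : Set (Equiv.Perm X)) : Set (X × X) :=
  {p | p.2 = p.1 ∨ ∃ g ∈ F, p.2 = g p.1}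

/-- The coarse structure `𝓔_G` generated by a set (group) `S` of permutations of `X`:
all entourages contained in `E_F` for some finite `F ⊆ S`. -/
def permCoarse (S : Set (Equiv.Perm X)) : Set (Set (X × X)) :=
  {E | IsEntourage E ∧ ∃ F : Finset (Equiv.Perm X),
    (F : Set (Equiv.Perm X)) ⊆ S ∧ E ⊆ permEnt (F : Set (Equiv.Perm X))}

variable {M : Type v} [MetricSpace M]

/-- A function `φ : X → M` is slowly oscillating. -/
def SlowlyOscillating (𝓔 : Set (Set (X × X))) (φ : X → M) : Prop :=
  ∀ ε : ℝ, 0 < ε → ∀ E ∈ 𝓔, ∃ B : Set X, IsBoundedSet 𝓔 B ∧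
    ∀ x : X, x ∉ B → EMetric.diam (φ '' entBall E x) < ENNReal.ofReal ε

/-- Two sets are asymptotically separated if `E[A] ∩ E[B]` is bounded for every `E ∈ 𝓔`. -/
def AsymptoticallySeparated (𝓔 : Set (Set (X × X))) (A B : Set X) : Prop :=
  ∀ E ∈ 𝓔, IsBoundedSet 𝓔 ((⋃ a ∈ A, entBall E a) ∩ ⋃ b ∈ B, entBall E b)

/-- A coarse space `(X, 𝓔)` is `M`-normal. -/
def IsCoarseNormal (𝓔 : Set (Set (X × X))) (M : Type v) [MetricSpace M] : Prop :=
  ∀ A B : Set X, A.Nonempty → B.Nonempty → Disjoint A B →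
    AsymptoticallySeparated 𝓔 A B →
    ∃ φ : X → M, SlowlyOscillating 𝓔 φ ∧
      ∃ ε : ℝ, 0 < ε ∧ ∀ a ∈ A, ∀ b ∈ B, ε ≤ dist (φ a) (φ b)

/-- `so(X,𝓔;M)`: the bounded slowly oscillating functions `X → M`. -/
def soSet (𝓔 : Set (Set (X × X))) (M : Type v) [MetricSpace M] : Set (X → M) :=
  {φ | Bornology.IsBounded (Set.range φ) ∧ SlowlyOscillating 𝓔 φ}

/-- The canonical map `δ_M : X → M^{so(X,𝓔;M)}`. -/
def deltaMap (𝓔 : Set (Set (X × X))) (M : Type v) [MetricSpace M] :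
    X → (↥(soSet 𝓔 M) → M) := fun x f => f.1 x

/-- The underlying set of the `M`-compactification: the closure of `δ_M(X)`. -/
def hCompSet (𝓔 : Set (Set (X × X))) (M : Type v) [MetricSpace M] :
    Set (↥(soSet 𝓔 M) → M) := closure (Set.range (deltaMap 𝓔 M))

/-- The `M`-compactification `h_M(X,𝓔)` of the coarse space `(X,𝓔)`. -/
abbrev HComp (𝓔 : Set (Set (X × X))) (M : Type v) [MetricSpace M] :=
  ↥(hCompSet 𝓔 M)

/-- The copy of a point `x ∈ X` inside the `M`-compactification. -/
def deltaEmb (𝓔 : Set (Set (X × X))) (M : Type v) [MetricSpace M] (x : X) :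
    HComp 𝓔 M := ⟨deltaMap 𝓔 M x, subset_closure (Set.mem_range_self x)⟩

/-- The permutation group `G_{X, h_M(X,𝓔)}` of the `M`-compactification, as a set of
permutations of `X` (`X` being identified with the set of isolated points of `h_M(X,𝓔)`
via `δ_M`): those permutations induced by homeomorphisms of `h_M(X,𝓔)` fixing all
points outside (the image of) `X`. -/
def hPermGroup (𝓔 : Set (Set (X × X))) (M : Type v) [MetricSpace M] :
    Set (Equiv.Perm X) :=
  {σ | ∃ h : HComp 𝓔 M ≃ₜ HComp 𝓔 M,
    (∀ z : HComp 𝓔 M, z ∉ Set.range (deltaEmb 𝓔 M) → h z = z) ∧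
    ∀ x : X, h (deltaEmb 𝓔 M x) = deltaEmb 𝓔 M (σ x)}

end CoarsePreamble

section TopPreamble

/-- The set of isolated points of a topological space. -/
def isolatedPoints (K : Type w) [TopologicalSpace K] : Set K :=
  {x | IsOpen ({x} : Set K)}

/-- A compactification: a compact Hausdorff space with dense set of isolated points. -/
def IsCompactification (K : Type w) [TopologicalSpace K] : Prop :=
  CompactSpace K ∧ T2Space K ∧ Dense (isolatedPoints K)

/-- The permutation group `G_{K',K}` of a compactification `K`: permutations of the
set `K'` of isolated points induced by homeomorphisms of `K` fixing `K \ K'` pointwise. -/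
def homeoPerms (K : Type w) [TopologicalSpace K] :
    Set (Equiv.Perm ↥(isolatedPoints K)) :=
  {σ | ∃ h : K ≃ₜ K, (∀ z : K, z ∉ isolatedPoints K → h z = z) ∧
    ∀ x : ↥(isolatedPoints K), h x.val = (σ x).val}

/-- The oscillation of `φ : K' → M` at a point `z ∈ K`. -/
noncomputable def oscAt {K : Type w} [TopologicalSpace K] {M : Type v} [MetricSpace M]
    (φ : ↥(isolatedPoints K) → M) (z : K) : ENNReal :=
  ⨅ (O : Set K) (_ : IsOpen O) (_ : z ∈ O),
    EMetric.diam (φ '' (Subtype.val ⁻¹' O))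

/-- A compactification `K` is `M`-soft. -/
def IsMSoft (K : Type w) [TopologicalSpace K] (M : Type v) [MetricSpace M] : Prop :=
  ∀ φ : ↥(isolatedPoints K) → M, Bornology.IsBounded (Set.range φ) →
    (∃ z : K, 0 < oscAt φ z) →
    ∃ σ ∈ homeoPerms K, ∃ ε : ℝ, 0 < ε ∧
      {x : ↥(isolatedPoints K) | ε ≤ dist (φ (σ x)) (φ x)}.Infinite

/-- A compactification `K` is soft. -/
def IsSoft (K : Type w) [TopologicalSpace K] : Prop :=
  ∀ A B : Set ↥(isolatedPoints K), Disjoint A B →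
    (closure (Subtype.val '' A) ∩ closure (Subtype.val '' B)).Nonempty →
    ∃ σ ∈ homeoPerms K, {x : ↥(isolatedPoints K) | x ∈ A ∧ σ x ∈ B}.Infinite

/-- `uc(K',K;M)`: restrictions to the set of isolated points of continuous functions `K → M`. -/
def ucSet (K : Type w) [TopologicalSpace K] (M : Type v) [MetricSpace M] :
    Set (↥(isolatedPoints K) → M) :=
  {φ | ∃ f : K → M, Continuous f ∧ ∀ x : ↥(isolatedPoints K), f x.val = φ x}

/-- `uc(X, h_M(X,𝓔); M)`: restrictions to `X` (via `δ_M`) of continuous functions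
`h_M(X,𝓔) → M`. -/
def ucHComp {X : Type u} (𝓔 : Set (Set (X × X))) (M : Type v) [MetricSpace M] :
    Set (X → M) :=
  {φ | ∃ f : HComp 𝓔 M → M, Continuous f ∧ ∀ x : X, f (deltaEmb 𝓔 M x) = φ x}

/-- The cardinal `Δ`: the smallest cardinality of a base of a cellular finitary coarse
structure on `ω` containing no infinite discrete subsets. -/
noncomputable def smallDeltaCard : Cardinal.{0} :=
  sInf {c : Cardinal.{0} | ∃ 𝓔 : Set (Set (ℕ × ℕ)), IsCoarseStructure 𝓔 ∧
    IsCellularCoarse 𝓔 ∧ IsFinitaryCoarse 𝓔 ∧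
    (∀ D : Set ℕ, IsCoarseDiscrete 𝓔 D → D.Finite) ∧
    ∃ 𝓑 : Set (Set (ℕ × ℕ)), IsCoarseBase 𝓔 𝓑 ∧ Cardinal.mk ↥𝓑 = c}

/-- The cardinal `𝔭`. -/
noncomputable def pCard : Cardinal.{0} :=
  sInf {c : Cardinal.{0} | ∃ F : Set (Set ℕ), (∀ A ∈ F, A.Infinite) ∧
    (∀ S : Finset (Set ℕ), (S : Set (Set ℕ)) ⊆ F → (⋂ A ∈ S, A).Infinite) ∧
    (∀ I : Set ℕ, I.Infinite → ∃ A ∈ F, (I \ A).Infinite) ∧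
    Cardinal.mk ↥F = c}

/-- The character `χ(x;K)` of a point. -/
noncomputable def charAt (K : Type w) [TopologicalSpace K] (x : K) : Cardinal.{w} :=
  sInf {c : Cardinal.{w} | ∃ 𝓑 : Set (Set K), (∀ U ∈ 𝓑, IsOpen U ∧ x ∈ U) ∧
    (∀ V : Set K, IsOpen V → x ∈ V → ∃ U ∈ 𝓑, U ⊆ V) ∧ Cardinal.mk ↥𝓑 = c}

/-- The character `χ(K)` of a space. -/
noncomputable def spaceChar (K : Type w) [TopologicalSpace K] : Cardinal.{w} :=
  ⨆ x : K, charAt K x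

/-- A corona: a compact Hausdorff space homeomorphic to the remainder of a
compactification of the countable discrete space `ℕ`. -/
def IsCorona (K : Type w) [TopologicalSpace K] : Prop :=
  CompactSpace K ∧ T2Space K ∧
    ∃ (C : Type w) (_ : TopologicalSpace C), IsCompactification C ∧
      (isolatedPoints C).Infinite ∧ (isolatedPoints C).Countable ∧
      Nonempty (K ≃ₜ ↥((isolatedPoints C)ᶜ))

/-- A soft corona. -/
def IsSoftCorona (K : Type w) [TopologicalSpace K] : Prop :=
  CompactSpace K ∧ T2Space K ∧
    ∃ (C : Type w) (_ : TopologicalSpace C), IsCompactification C ∧ IsSoft C ∧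
      (isolatedPoints C).Infinite ∧ (isolatedPoints C).Countable ∧
      Nonempty (K ≃ₜ ↥((isolatedPoints C)ᶜ))

/-- An `M`-soft corona. -/
def IsMSoftCorona (K : Type w) [TopologicalSpace K] (M : Type v) [MetricSpace M] : Prop :=
  CompactSpace K ∧ T2Space K ∧
    ∃ (C : Type w) (_ : TopologicalSpace C), IsCompactification C ∧ IsMSoft C M ∧
      (isolatedPoints C).Infinite ∧ (isolatedPoints C).Countable ∧
      Nonempty (K ≃ₜ ↥((isolatedPoints C)ᶜ))

end TopPreamble


/-!
Since `M` is proper and `φ` is bounded, `φ` maps the trace on `K'` of the neighbourhood filter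
of `z` into a compact set. Positive oscillation at `z` means this image filter does not converge,
so it has two cluster points `p ≠ q`. Then the real function `x ↦ dist (φ x) p` has the cluster
points `0` and `dist q p` at `z`, hence positive oscillation, and as `dist (φ x) p` is 1-Lipschitz
in `φ x`, any `σ` displacing it by `ε` infinitely often displaces `φ` by `ε` as well.
-/

section Oscillation

variable {K : Type w} [TopologicalSpace K] {M : Type v} [MetricSpace M]
  {φ : isolatedPoints K → M} {z : K}

theorem oscAt_le_ediam_of_mem {s : Set M}
    (hs : s ∈ map φ (comap Subtype.val (𝓝 z))) : oscAt φ z ≤ Metric.ediam s := by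
  obtain ⟨t, ht, hts⟩ := mem_comap.mp (mem_map.mp hs)
  obtain ⟨O, hOt, hO, hzO⟩ := mem_nhds_iff.mp ht
  refine (iInf₂_le O hO).trans ((iInf_le _ hzO).trans (Metric.ediam_mono ?_))
  rintro _ ⟨x, hx, rfl⟩
  exact hts (hOt hx)

theorem le_oscAt_of_forall_mem {c : ENNReal}
    (h : ∀ s ∈ map φ (comap Subtype.val (𝓝 z)), c ≤ Metric.ediam s) : c ≤ oscAt φ z :=
  le_iInf₂ fun _ hO => le_iInf fun hzO =>
    h _ (image_mem_map (preimage_mem_comap (hO.mem_nhds hzO)))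

theorem neBot_of_oscAt_pos (h : 0 < oscAt φ z) :
    (comap (Subtype.val : isolatedPoints K → K) (𝓝 z)).NeBot := by
  rw [neBot_iff]
  intro hbot
  have := oscAt_le_ediam_of_mem (φ := φ) (s := ∅) (by rw [hbot, map_bot]; exact mem_bot)
  rw [Metric.ediam_empty] at this
  exact h.not_ge this

theorem oscAt_eq_zero_of_tendsto {p : M}
    (h : Tendsto φ (comap Subtype.val (𝓝 z)) (𝓝 p)) : oscAt φ z = 0 := by
  by_contra hne
  have := neBot_of_oscAt_pos (pos_iff_ne_zero.mpr hne)
  obtain ⟨ε, hε, hεosc⟩ := exists_between (pos_iff_ne_zero.mpr hne)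
  obtain ⟨t, ht, hsmall⟩ := (EMetric.cauchy_iff.mp h.cauchy_map).2 ε hε
  have hdiam : Metric.ediam t ≤ ε := Metric.ediam_le fun x hx y hy => (hsmall x hx y hy).le
  exact (hεosc.trans_le ((oscAt_le_ediam_of_mem ht).trans hdiam)).false

theorem edist_le_oscAt_of_mapClusterPt {p q : M}
    (hp : MapClusterPt p (comap Subtype.val (𝓝 z)) φ)
    (hq : MapClusterPt q (comap Subtype.val (𝓝 z)) φ) : edist p q ≤ oscAt φ z :=
  le_oscAt_of_forall_mem fun s hs => by
    rw [← Metric.ediam_closure]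
    exact Metric.edist_le_ediam_of_mem (hp.mem_closure_of_mem s hs) (hq.mem_closure_of_mem s hs)

theorem exists_oscAt_dist_pos [ProperSpace M] (hφ : Bornology.IsBounded (range φ))
    (hosc : 0 < oscAt φ z) : ∃ p : M, 0 < oscAt (fun x => dist (φ x) p) z := by
  have := neBot_of_oscAt_pos hosc
  have hmem : ∀ᶠ x in comap Subtype.val (𝓝 z), φ x ∈ closure (range φ) :=
    Eventually.of_forall fun x => subset_closure (mem_range_self x)
  obtain ⟨p, -, hp⟩ := hφ.isCompact_closure.exists_mapClusterPt (tendsto_principal.mpr hmem)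
  obtain ⟨q, -, hq, hqp⟩ : ∃ q ∈ closure (range φ), MapClusterPt q _ φ ∧ q ≠ p := by
    by_contra! hunique
    exact hosc.ne' (oscAt_eq_zero_of_tendsto
      (hφ.isCompact_closure.tendsto_nhds_of_unique_mapClusterPt hmem hunique))
  have hdist : Continuous fun m : M => dist m p := continuous_id.dist continuous_const
  refine ⟨p, lt_of_lt_of_le ?_ (edist_le_oscAt_of_mapClusterPt
    (hq.continuousAt_comp hdist.continuousAt) (hp.continuousAt_comp hdist.continuousAt))⟩
  simpa using hqp

end Oscillation

theorem statement9_general (M : Type v) [MetricSpace M] [ProperSpace M]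
    (K : Type u) [TopologicalSpace K]
    (hsoft : IsMSoft K ℝ) : IsMSoft K M := by
  intro φ hφ ⟨z, hosc⟩
  obtain ⟨p, hψ⟩ := exists_oscAt_dist_pos hφ hosc
  have hψb : Bornology.IsBounded (range fun x => dist (φ x) p) := by
    simpa only [← range_comp'] using (LipschitzWith.dist_left p).isBounded_image hφ
  obtain ⟨σ, hσ, ε, hε, hinf⟩ := hsoft _ hψb ⟨z, hψ⟩
  exact ⟨σ, hσ, ε, hε, hinf.mono fun x hx => hx.trans (dist_dist_dist_le_left _ _ _)⟩

/-- For a proper metric space `M`, every `ℝ`-soft compactification is `M`-soft. -/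
theorem statement9 (M : Type v) [MetricSpace M] [ProperSpace M] [Nontrivial M]
    (K : Type u) [TopologicalSpace K] (hK : IsCompactification K)
    (hsoft : IsMSoft K ℝ) : IsMSoft K M :=
  statement9_general M K hsoft
end

section
/- Let M be a proper metric space. Every M-soft compactification is 𝟚-soft, where 𝟚 = {0,1} is the doubleton with the {0,1}-valued metric. -/
open Set Filter Topology

universe u u₁ u₂ v w

/-!
The two-point space `𝟚` embeds bi-Lipschitz into any metric space with two distinct points, and
`M`-softness passes to `N` along a bi-Lipschitz map `N → M`: composing with it keeps a function
bounded and its oscillation positive, while a uniform separation of the composite pulls back.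
-/

section BiLipschitz

variable {K : Type w} [TopologicalSpace K] {M : Type v} [MetricSpace M] {N : Type u₁}
  [MetricSpace N] {f : N → M}

theorem AntilipschitzWith.oscAt_div_le_oscAt_comp {C : NNReal} (hf : AntilipschitzWith C f)
    (φ : ↥(isolatedPoints K) → N) (z : K) : oscAt φ z / C ≤ oscAt (f ∘ φ) z := by
  refine le_iInf₂ fun O hO => le_iInf fun hzO => ENNReal.div_le_of_le_mul ?_
  calc oscAt φ z ≤ Metric.ediam (φ '' (Subtype.val ⁻¹' O)) := iInf₂_le_of_le O hO (iInf_le _ hzO)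
    _ ≤ C * Metric.ediam (f '' (φ '' (Subtype.val ⁻¹' O))) := hf.le_mul_ediam_image _
    _ = Metric.ediam ((f ∘ φ) '' (Subtype.val ⁻¹' O)) * C := by rw [image_comp, mul_comm]

theorem IsMSoft.of_lipschitzWith_antilipschitzWith {L C : NNReal} (hsoft : IsMSoft K M)
    (hL : LipschitzWith L f) (hC : AntilipschitzWith C f) : IsMSoft K N := by
  rintro φ hφ ⟨z, hz⟩
  have hosc : 0 < oscAt (f ∘ φ) z :=
    (ENNReal.div_pos hz.ne' ENNReal.coe_ne_top).trans_le (hC.oscAt_div_le_oscAt_comp φ z)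
  obtain ⟨σ, hσ, ε, hε, hinf⟩ :=
    hsoft (f ∘ φ) (by rw [range_comp]; exact hL.isBounded_image hφ) ⟨z, hosc⟩
  refine ⟨σ, hσ, ε / (L + 1), by positivity, hinf.mono fun x hx => ?_⟩
  rw [mem_ofPred_eq, div_le_iff₀ (by positivity)]
  calc ε ≤ dist (f (φ (σ x))) (f (φ x)) := hx
    _ ≤ L * dist (φ (σ x)) (φ x) := hL.dist_le_mul _ _
    _ ≤ dist (φ (σ x)) (φ x) * (L + 1) := by
      nlinarith [dist_nonneg (x := φ (σ x)) (y := φ x)]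

end BiLipschitz

section TwoPoint

variable {M : Type v} [MetricSpace M]

noncomputable def twoPointMap (a b : M) : ↥({0, 1} : Set ℝ) → M :=
  fun u => if (u : ℝ) = 0 then a else b

theorem dist_twoPointMap (a b : M) (u v : ↥({0, 1} : Set ℝ)) :
    dist (twoPointMap a b u) (twoPointMap a b v) = dist a b * dist u v := by
  rcases u with ⟨_, rfl | rfl⟩ <;> rcases v with ⟨_, rfl | rfl⟩ <;>
    simp [twoPointMap, Subtype.dist_eq, dist_comm]

theorem lipschitzWith_twoPointMap (a b : M) : LipschitzWith (nndist a b) (twoPointMap a b) :=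
  .of_dist_le_mul fun u v => (dist_twoPointMap a b u v).le

theorem antilipschitzWith_twoPointMap {a b : M} (h : a ≠ b) :
    AntilipschitzWith (nndist a b)⁻¹ (twoPointMap a b) :=
  .of_le_mul_dist fun u v => by
    rw [dist_twoPointMap, NNReal.coe_inv, coe_nndist, inv_mul_cancel_left₀ (dist_ne_zero.2 h)]

end TwoPoint

theorem statement10_general (M : Type v) [MetricSpace M] [Nontrivial M]
    (K : Type u) [TopologicalSpace K]
    (hsoft : IsMSoft K M) : IsMSoft K ↥({0, 1} : Set ℝ) := by
  obtain ⟨a, b, hab⟩ := exists_pair_ne M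
  exact hsoft.of_lipschitzWith_antilipschitzWith (lipschitzWith_twoPointMap a b)
    (antilipschitzWith_twoPointMap hab)

/-- For a proper metric space `M`, every `M`-soft compactification is
`𝟚`-soft, where `𝟚 = {0,1} ⊆ ℝ` carries the `{0,1}`-valued metric. -/
theorem statement10 (M : Type v) [MetricSpace M] [ProperSpace M] [Nontrivial M]
    (K : Type u) [TopologicalSpace K] (hK : IsCompactification K)
    (hsoft : IsMSoft K M) : IsMSoft K ↥({0, 1} : Set ℝ) :=
  statement10_general M K hsoft
end

section
/- A compactification K is soft if for any disjoint sets A, B ⊆ K' whose closures in K intersect, there are sequences (aₙ)ₙ in A and (bₙ)ₙ in B that converge to the same point z ∈ K. -/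
open Set Filter Topology

universe u u₁ u₂ v w

/-! The hypothesis yields sequences `aₙ ∈ A`, `bₙ ∈ B` of isolated points converging to a common
point `z`, which therefore is not isolated. After passing to a subsequence the points `aₙ, bₙ` are
pairwise distinct, and the involution of `K` swapping `aₙ ↔ bₙ` and fixing everything else is a
homeomorphism: near `z` it only exchanges points of pairs that both converge to `z`, and every
other non-isolated point has a neighbourhood meeting only finitely many of the `aₙ, bₙ`. -/

open Function Equiv

theorem Set.Infinite.exists_injective_comp {ι X : Type*} {u : ι → X} (hu : (range u).Infinite) :
    ∃ ψ : ℕ → ι, Injective (u ∘ ψ) := by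
  refine ⟨rangeSplitting u ∘ hu.natEmbedding, ?_⟩
  have hu_comp : u ∘ rangeSplitting u ∘ hu.natEmbedding = Subtype.val ∘ hu.natEmbedding :=
    funext fun n => apply_rangeSplitting u _
  rw [hu_comp]
  exact Subtype.val_injective.comp (Infinite.natEmbedding _ hu).injective

theorem Filter.Tendsto.sumElim_cofinite {α β γ : Type*} {f : α → γ} {g : β → γ} {l : Filter γ}
    (hf : Tendsto f cofinite l) (hg : Tendsto g cofinite l) :
    Tendsto (Sum.elim f g) cofinite l := by
  rw [Tendsto, map_sumElim_eq, Sum.inl_injective.comap_cofinite_eq,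
    Sum.inr_injective.comap_cofinite_eq]
  exact sup_le hf hg

section Sequences

variable {X : Type*} [TopologicalSpace X]

theorem notMem_isolatedPoints_of_tendsto {u v : ℕ → X} {z : X} (hu : Tendsto u atTop (𝓝 z))
    (hv : Tendsto v atTop (𝓝 z)) (huv : ∀ n, u n ≠ v n) : z ∉ isolatedPoints X := by
  intro hz
  rw [isolatedPoints, mem_ofPred_eq, isOpen_singleton_iff_nhds_eq_pure] at hz
  rw [hz, tendsto_pure] at hu hv
  obtain ⟨n, hun, hvn⟩ := (hu.and hv).exists
  exact huv n (hun.trans hvn.symm)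

theorem Filter.Tendsto.infinite_range_of_forall_ne [T1Space X] {u : ℕ → X} {z : X}
    (hu : Tendsto u atTop (𝓝 z)) (huz : ∀ n, u n ≠ z) : (range u).Infinite := fun hfin => by
  obtain ⟨n, hn⟩ : z ∈ range u :=
    hfin.isClosed.closure_eq ▸ mem_closure_of_tendsto hu (.of_forall mem_range_self)
  exact huz n hn

theorem exists_injective_comp_of_tendsto [T1Space X] {u v : ℕ → X} {z : X}
    (hu : Tendsto u atTop (𝓝 z)) (hv : Tendsto v atTop (𝓝 z))
    (huz : ∀ n, u n ≠ z) (hvz : ∀ n, v n ≠ z) :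
    ∃ ψ : ℕ → ℕ, Injective (u ∘ ψ) ∧ Injective (v ∘ ψ) := by
  obtain ⟨ψ₁, hψ₁⟩ := (hu.infinite_range_of_forall_ne huz).exists_injective_comp
  have hvψ₁ : Tendsto (v ∘ ψ₁) atTop (𝓝 z) := hv.comp hψ₁.of_comp.nat_tendsto_atTop
  obtain ⟨ψ₂, hψ₂⟩ := (hvψ₁.infinite_range_of_forall_ne fun n => hvz _).exists_injective_comp
  exact ⟨ψ₁ ∘ ψ₂, hψ₁.comp hψ₂.of_comp, hψ₂⟩

end Sequences

section ExtendAlong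

variable {K ι : Type*} {p : ι → K}

open Classical in
noncomputable def Equiv.Perm.extendAlong (e : Perm ι) (hp : Injective p) : Perm K :=
  e.extendDomain (Equiv.ofInjective p hp)

namespace Equiv.Perm

variable (e : Perm ι) (hp : Injective p)

theorem extendAlong_apply_self (i : ι) : e.extendAlong hp (p i) = p (e i) := by
  classical
  simpa [extendAlong] using extendDomain_apply_image e (Equiv.ofInjective p hp) i

theorem extendAlong_apply_of_notMem {x : K} (hx : x ∉ range p) : e.extendAlong hp x = x := by
  classical
  exact extendDomain_apply_not_subtype e (Equiv.ofInjective p hp) hx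

theorem extendAlong_symm : (e.extendAlong hp).symm = extendAlong e.symm hp := by
  classical
  exact extendDomain_symm e (Equiv.ofInjective p hp)

end Equiv.Perm

variable [TopologicalSpace K]

theorem continuousAt_of_mem_isolatedPoints {Y : Type*} [TopologicalSpace Y] (f : K → Y) {x : K}
    (hx : x ∈ isolatedPoints K) : ContinuousAt f x := by
  rw [ContinuousAt, (isOpen_singleton_iff_nhds_eq_pure x).1 hx]
  exact tendsto_pure_nhds f x

theorem compl_image_mem_nhds [T1Space K] {s : Set ι} (hs : s.Finite) {w : K} (hw : w ∉ range p) :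
    (p '' s)ᶜ ∈ 𝓝 w :=
  (hs.image p).isClosed.compl_mem_nhds fun ⟨i, _, hi⟩ => hw ⟨i, hi⟩

variable {z : K}

theorem eventually_notMem_range_of_tendsto_cofinite [T2Space K]
    (hpz : Tendsto p cofinite (𝓝 z)) {w : K} (hwz : w ≠ z) (hw : w ∉ range p) : ∀ᶠ x in 𝓝 w, x ∉ range p := by
  obtain ⟨U, V, hU, hV, hwU, hzV, hUV⟩ := t2_separation hwz
  have hfin : {i | p i ∉ V}.Finite := hpz (hV.mem_nhds hzV)
  filter_upwards [compl_image_mem_nhds hfin hw, hU.mem_nhds hwU] with x hx hxU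
  rintro ⟨i, rfl⟩
  exact hx ⟨i, fun hiV => hUV.ne_of_mem hxU hiV rfl, rfl⟩

theorem Equiv.Perm.continuousAt_extendAlong [T1Space K] (hpz : Tendsto p cofinite (𝓝 z))
    (e : Perm ι) (hp : Injective p) (hz : z ∉ range p) : ContinuousAt (e.extendAlong hp) z := by
  rw [ContinuousAt, e.extendAlong_apply_of_notMem hp hz]
  refine fun U hU => mem_map.2 ?_
  have hfin : {i | p (e i) ∉ U}.Finite := (hpz.comp e.injective.tendsto_cofinite) hU
  filter_upwards [compl_image_mem_nhds hfin hz, hU] with x hx hxU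
  by_cases hxp : x ∈ range p
  · obtain ⟨i, rfl⟩ := hxp
    rw [mem_preimage, e.extendAlong_apply_self hp]
    by_contra hi
    exact hx ⟨i, hi, rfl⟩
  · rwa [mem_preimage, e.extendAlong_apply_of_notMem hp hxp]

theorem Equiv.Perm.continuous_extendAlong [T2Space K] (hpz : Tendsto p cofinite (𝓝 z))
    (e : Perm ι) (hp : Injective p) (hiso : ∀ i, p i ∈ isolatedPoints K) : Continuous (e.extendAlong hp) := by
  refine continuous_iff_continuousAt.2 fun w => ?_
  by_cases hw : w ∈ isolatedPoints K
  · exact continuousAt_of_mem_isolatedPoints _ hw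
  have hwp : w ∉ range p := by
    rintro ⟨i, rfl⟩
    exact hw (hiso i)
  rcases eq_or_ne w z with rfl | hwz
  · exact e.continuousAt_extendAlong hpz hp hwp
  · refine continuousAt_id.congr ?_
    filter_upwards [eventually_notMem_range_of_tendsto_cofinite hpz hwz hwp] with x hx
    exact (e.extendAlong_apply_of_notMem hp hx).symm

end ExtendAlong

section HomeoPerms

variable {K : Type*} [TopologicalSpace K]

theorem Homeomorph.mapsTo_isolatedPoints {Y : Type*} [TopologicalSpace Y] (h : K ≃ₜ Y) :
    MapsTo h (isolatedPoints K) (isolatedPoints Y) := fun x hx => by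
  simpa [isolatedPoints, image_singleton] using h.isOpenMap _ hx

theorem Homeomorph.exists_mem_homeoPerms (h : K ≃ₜ K)
    (hfix : ∀ z, z ∉ isolatedPoints K → h z = z) :
    ∃ σ ∈ homeoPerms K, ∀ x, (σ x : K) = h x :=
  ⟨Perm.subtypePerm h.toEquiv fun x =>
      ⟨fun hx => by simpa using h.symm.mapsTo_isolatedPoints hx,
        fun hx => h.mapsTo_isolatedPoints hx⟩,
    ⟨h, hfix, fun _ => rfl⟩, fun _ => rfl⟩

theorem exists_mem_homeoPerms_apply_eq [T2Space K] {ι : Type*} {p : ι → isolatedPoints K}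
    (hp : Injective p) {z : K} (hpz : Tendsto (Subtype.val ∘ p) cofinite (𝓝 z)) (e : Perm ι) :
    ∃ σ ∈ homeoPerms K, ∀ i, σ (p i) = p (e i) := by
  have hp' : Injective (Subtype.val ∘ p) := Subtype.val_injective.comp hp
  have hiso : ∀ i, (Subtype.val ∘ p) i ∈ isolatedPoints K := fun i => (p i).2
  let h : K ≃ₜ K :=
    { toEquiv := e.extendAlong hp'
      continuous_toFun := e.continuous_extendAlong hpz hp' hiso
      continuous_invFun := by
        rw [Equiv.invFun_as_coe, e.extendAlong_symm]
        exact Perm.continuous_extendAlong hpz e.symm hp' hiso }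
  have hfix : ∀ x, x ∉ isolatedPoints K → h x = x := fun x hx =>
    e.extendAlong_apply_of_notMem hp' fun ⟨i, hi⟩ => hx (hi ▸ hiso i)
  obtain ⟨σ, hσ, hσh⟩ := h.exists_mem_homeoPerms hfix
  exact ⟨σ, hσ, fun i => Subtype.ext ((hσh (p i)).trans (e.extendAlong_apply_self hp' i))⟩

end HomeoPerms

/-- A compactification `K` is soft if for any disjoint `A, B ⊆ K'` with
intersecting closures there are sequences in `A` and in `B` converging to a common point. -/
theorem statement11 (K : Type u) [TopologicalSpace K] (hK : IsCompactification K)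
    (h : ∀ A B : Set ↥(isolatedPoints K), Disjoint A B →
      (closure (Subtype.val '' A) ∩ closure (Subtype.val '' B)).Nonempty →
      ∃ (a : ℕ → ↥(isolatedPoints K)) (b : ℕ → ↥(isolatedPoints K)) (z : K),
        (∀ n, a n ∈ A) ∧ (∀ n, b n ∈ B) ∧
        Filter.Tendsto (fun n => (a n).val) Filter.atTop (nhds z) ∧
        Filter.Tendsto (fun n => (b n).val) Filter.atTop (nhds z)) :
    IsSoft K := by
  have : T2Space K := hK.2.1
  intro A B hAB hAB'
  obtain ⟨a, b, z, haA, hbB, ha, hb⟩ := h A B hAB hAB'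
  have hab : ∀ m n, a m ≠ b n := fun m n => hAB.ne_of_mem (haA m) (hbB n)
  have hz : z ∉ isolatedPoints K :=
    notMem_isolatedPoints_of_tendsto ha hb fun n => Subtype.val_injective.ne (hab n n)
  have hne : ∀ x : isolatedPoints K, (x : K) ≠ z := fun x hx => hz (hx ▸ x.2)
  obtain ⟨ψ, hψa, hψb⟩ := exists_injective_comp_of_tendsto ha hb (fun _ => hne _) (fun _ => hne _)
  have hψ : Tendsto ψ atTop atTop := hψa.of_comp.nat_tendsto_atTop
  have haψ : Injective (a ∘ ψ) := Injective.of_comp (f := Subtype.val) hψa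
  have hinj : Injective (Sum.elim (a ∘ ψ) (b ∘ ψ)) :=
    haψ.sumElim (Injective.of_comp (f := Subtype.val) hψb) fun _ _ => hab _ _
  have hlim : Tendsto (Subtype.val ∘ Sum.elim (a ∘ ψ) (b ∘ ψ)) cofinite (𝓝 z) := by
    rw [Sum.comp_elim]
    exact (Nat.cofinite_eq_atTop ▸ ha.comp hψ).sumElim_cofinite (Nat.cofinite_eq_atTop ▸ hb.comp hψ)
  obtain ⟨σ, hσ, hσab⟩ := exists_mem_homeoPerms_apply_eq hinj hlim (Equiv.sumComm ℕ ℕ)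
  refine ⟨σ, hσ, (infinite_range_of_injective haψ).mono ?_⟩
  rintro _ ⟨n, rfl⟩
  exact ⟨haA _, (hσab (.inl n)).symm ▸ hbB _⟩
end

section
/- Every compactification K such that the space K is Fréchet–Urysohn is soft. -/
open Set Filter Topology

universe u u₁ u₂ v w

/-!
The closures of `A` and `B` meet in a point `z`, which cannot be isolated. By the
Fréchet–Urysohn property there are injective sequences `aₙ ∈ A`, `bₙ ∈ B` converging to `z`.
The involution of `K` exchanging `aₙ` and `bₙ` and fixing every other point is a
homeomorphism: it is continuous at the isolated points `aₙ`, `bₙ`, and near any other point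
`p` the only moved points are `aₙ`, `bₙ` with `n` large, which accumulate only at `z`, where
their images also converge to `z`. It maps every `aₙ` into `B`.
-/

open Function Equiv

theorem mem_of_mem_closure_of_isOpen_singleton {X : Type*} [TopologicalSpace X] {s : Set X}
    {x : X} (hx : x ∈ closure s) (h : IsOpen ({x} : Set X)) : x ∈ s := by
  simpa using mem_closure_iff.1 hx {x} h rfl

theorem comap_nhds_le_cofinite_of_notMem_range {ι X : Type*} [TopologicalSpace X] [T1Space X]
    {c : ι → X} {p : X} (hp : p ∉ range c) : comap c (𝓝 p) ≤ cofinite :=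
  le_cofinite_iff_compl_singleton_mem.2 fun i ↦
    ⟨{c i}ᶜ, compl_singleton_mem_nhds fun h ↦ hp ⟨i, h.symm⟩,
      fun _ hj hji ↦ hj (congrArg c hji)⟩

theorem exists_injective_tendsto_cofinite_of_mem_closure {X : Type*} [TopologicalSpace X]
    [FrechetUrysohnSpace X] [T1Space X] {s : Set X} {z : X} (hz : z ∈ closure s)
    (hzs : z ∉ s) : ∃ u : ℕ → X, Injective u ∧ (∀ n, u n ∈ s) ∧ Tendsto u cofinite (𝓝 z) := by
  obtain ⟨v, hvs, hv⟩ := mem_closure_iff_seq_limit.1 hz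
  have hinf : (range v).Infinite := fun hfin ↦ hzs <| range_subset_iff.2 hvs <|
    hfin.isClosed.closure_subset (mem_closure_of_tendsto hv (Eventually.of_forall mem_range_self))
  set e := hinf.natEmbedding
  choose φ hφ using fun n ↦ (e n).2
  have hvφ : v ∘ φ = Subtype.val ∘ e := funext hφ
  have hφinj : Injective φ := fun m n h ↦ e.injective <| Subtype.val_injective <| by
    rw [← hφ m, ← hφ n, h]
  refine ⟨v ∘ φ, hvφ ▸ Subtype.val_injective.comp e.injective, fun n ↦ hvs (φ n), ?_⟩
  exact (Nat.cofinite_eq_atTop ▸ hv).comp hφinj.tendsto_cofinite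

section PermuteIsolated

variable {ι X : Type*} [TopologicalSpace X] [T2Space X] {c : ι → X} {z : X}

theorem continuous_extendDomain_ofInjective [DecidablePred (· ∈ range c)] (hc : Injective c)
    (hiso : ∀ i, IsOpen {c i}) (hz : Tendsto c cofinite (𝓝 z)) (τ : Perm ι) :
    Continuous (τ.extendDomain (ofInjective c hc)) := by
  set H := τ.extendDomain (ofInjective c hc)
  have H_comp : H ∘ c = c ∘ τ := funext fun i ↦ by
    simpa using τ.extendDomain_apply_image (ofInjective c hc) i
  have H_eqOn : EqOn H id (range c)ᶜ := fun _ ↦ τ.extendDomain_apply_not_subtype _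
  refine continuous_iff_continuousAt.2 fun p ↦ ?_
  by_cases hp : p ∈ range c
  · obtain ⟨i, rfl⟩ := hp
    rw [ContinuousAt, (isOpen_singleton_iff_nhds_eq_pure _).1 (hiso i)]
    exact tendsto_pure_nhds H (c i)
  have hcomap : comap c (𝓝 p) ≤ cofinite := comap_nhds_le_cofinite_of_notMem_range hp
  -- If `comap c (𝓝 p)` is nontrivial, `c` converges along it to both `p` and `z`.
  have h_range : Tendsto (c ∘ τ) (comap c (𝓝 p)) (𝓝 p) := by
    rcases (comap c (𝓝 p)).eq_or_neBot with h | h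
    · simp [h]
    obtain rfl : p = z := tendsto_nhds_unique tendsto_comap (hz.mono_left hcomap)
    exact (hz.comp τ.injective.tendsto_cofinite).mono_left hcomap
  have h_compl : Tendsto H (𝓝[(range c)ᶜ] p) (𝓝 p) :=
    (tendsto_id.mono_left nhdsWithin_le_nhds).congr' (eventuallyEq_nhdsWithin_of_eqOn H_eqOn).symm
  rw [ContinuousAt, H_eqOn hp, ← nhdsWithin_univ, ← union_compl_self (range c),
    nhdsWithin_union, tendsto_sup, nhdsWithin, ← map_comap, tendsto_map'_iff, H_comp]
  exact ⟨h_range, h_compl⟩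

theorem exists_homeomorph_extendDomain (hc : Injective c) (hiso : ∀ i, IsOpen {c i})
    (hz : Tendsto c cofinite (𝓝 z)) (τ : Perm ι) :
    ∃ h : X ≃ₜ X, (∀ i, h (c i) = c (τ i)) ∧ ∀ x ∉ range c, h x = x := by
  classical
  set H := τ.extendDomain (ofInjective c hc)
  have H_symm : Continuous H.symm := by
    rw [Perm.extendDomain_symm]
    exact continuous_extendDomain_ofInjective hc hiso hz τ.symm
  refine ⟨⟨H, continuous_extendDomain_ofInjective hc hiso hz τ, H_symm⟩, fun i ↦ ?_,
    fun _ ↦ τ.extendDomain_apply_not_subtype _⟩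
  simpa using τ.extendDomain_apply_image (ofInjective c hc) i

end PermuteIsolated

theorem Homeomorph.isOpen_singleton_iff {X Y : Type*} [TopologicalSpace X] [TopologicalSpace Y]
    (h : X ≃ₜ Y) (x : X) : IsOpen ({h x} : Set Y) ↔ IsOpen ({x} : Set X) := by
  rw [← image_singleton, h.isOpen_image]

theorem exists_mem_homeoPerms_of_homeomorph {K : Type*} [TopologicalSpace K] (h : K ≃ₜ K)
    (hfix : ∀ z ∉ isolatedPoints K, h z = z) :
    ∃ σ ∈ homeoPerms K, ∀ x, (σ x : K) = h x :=
  ⟨Perm.subtypePerm h.toEquiv fun x ↦ h.isOpen_singleton_iff x, ⟨h, hfix, fun _ ↦ rfl⟩,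
    fun _ ↦ rfl⟩

/-- Every Fréchet–Urysohn compactification is soft. -/
theorem statement12 (K : Type u) [TopologicalSpace K] [FrechetUrysohnSpace K]
    (hK : IsCompactification K) : IsSoft K := by
  have : T2Space K := hK.2.1
  rintro A B hAB ⟨z, hzA, hzB⟩
  have hAB' : Disjoint (Subtype.val '' A) (Subtype.val '' B) :=
    disjoint_image_of_injective Subtype.val_injective hAB
  have hzA' : z ∉ Subtype.val '' A := fun h ↦ hAB'.notMem_of_mem_left h <|
    mem_of_mem_closure_of_isOpen_singleton hzB (Subtype.coe_image_subset _ A h)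
  have hzB' : z ∉ Subtype.val '' B := fun h ↦ hAB'.notMem_of_mem_right h <|
    mem_of_mem_closure_of_isOpen_singleton hzA (Subtype.coe_image_subset _ B h)
  obtain ⟨u, hu, huA, hut⟩ := exists_injective_tendsto_cofinite_of_mem_closure hzA hzA'
  obtain ⟨v, hv, hvB, hvt⟩ := exists_injective_tendsto_cofinite_of_mem_closure hzB hzB'
  choose a haA hau using fun n ↦ huA n
  choose b hbB hbv using fun n ↦ hvB n
  set c := Sum.elim u v
  have hc : Injective c := hu.sumElim hv fun m n ↦ hAB'.ne_of_mem (huA m) (hvB n)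
  have hc_iso : ∀ i, c i ∈ isolatedPoints K := by
    rintro (n | n)
    exacts [Subtype.coe_image_subset _ A (huA n), Subtype.coe_image_subset _ B (hvB n)]
  obtain ⟨h, h_swap, h_fix⟩ :=
    exists_homeomorph_extendDomain hc hc_iso (hut.sumElim_cofinite hvt) (Equiv.sumComm ℕ ℕ)
  obtain ⟨σ, hσ, hσh⟩ := exists_mem_homeoPerms_of_homeomorph h fun x hx ↦
    h_fix x (by rintro ⟨i, rfl⟩; exact hx (hc_iso i))
  have hσab : ∀ n, σ (a n) = b n := fun n ↦ Subtype.ext <| by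
    simpa [hσh, hau, hbv, c] using h_swap (Sum.inl n)
  refine ⟨σ, hσ, infinite_of_injective_forall_mem (f := a) ?_ fun n ↦ ⟨haA n, ?_⟩⟩
  · exact fun m n hmn ↦ hu <| by rw [← hau m, ← hau n, hmn]
  · exact hσab n ▸ hbB n
end

section
/- Every separable compactification K of character χ(K) < 𝔭 is soft. -/
open Set Filter Topology

universe u u₁ u₂ v w

/-!
A point `z` in the closures of both `A` and `B` is not isolated. Since `K'` is countable and
`χ(z; K) < 𝔭`, the traces on `A` of a neighbourhood base at `z` have an infinite
pseudo-intersection, i.e. `A` contains a sequence converging to `z`; likewise for `B`. Exchanging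
the two sequences along a bijection and fixing every other point is a homeomorphism of `K`,
because both sequences converge to the fixed point `z`, and it maps infinitely many points of `A`
into `B`.
-/

open Cardinal

lemma exists_infinite_pseudoIntersection_of_mk_lt_pCard {ι : Type u} (S : ι → Set ℕ)
    (hcard : #ι < lift.{u} pCard) (hfip : ∀ t : Finset ι, (⋂ i ∈ t, S i).Infinite) :
    ∃ I : Set ℕ, I.Infinite ∧ ∀ i, (I \ S i).Finite := by
  classical
  by_contra! hnone
  have hp : pCard ≤ #(range S) := by
    apply csInf_le'
    refine ⟨range S, ?_, fun t ht => ?_, fun I hI => ?_, rfl⟩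
    · rintro _ ⟨i, rfl⟩
      simpa using hfip {i}
    · obtain ⟨t', -, rfl⟩ := Finset.subset_set_image_iff.mp (image_univ (f := S) ▸ ht)
      simpa [Finset.set_biInter_finset_image] using hfip t'
    · obtain ⟨i, hi⟩ := hnone I hI
      exact ⟨S i, mem_range_self i, hi⟩
  have hrange : lift.{u} #(range S) ≤ #ι := by simpa using mk_range_le_lift (f := S)
  exact (hcard.trans_le ((lift_le.mpr hp).trans hrange)).false

lemma exists_nhds_base_mk_eq_charAt {X : Type u} [TopologicalSpace X] (x : X) :
    ∃ 𝓑 : Set (Set X), (∀ U ∈ 𝓑, IsOpen U ∧ x ∈ U) ∧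
      (∀ V : Set X, IsOpen V → x ∈ V → ∃ U ∈ 𝓑, U ⊆ V) ∧ #𝓑 = charAt X x :=
  csInf_mem (s := {c | ∃ 𝓑 : Set (Set X), (∀ U ∈ 𝓑, IsOpen U ∧ x ∈ U) ∧
      (∀ V : Set X, IsOpen V → x ∈ V → ∃ U ∈ 𝓑, U ⊆ V) ∧ #𝓑 = c})
    ⟨_, {U | IsOpen U ∧ x ∈ U}, fun _ hU => hU, fun V hV hxV => ⟨V, ⟨hV, hxV⟩, subset_rfl⟩, rfl⟩

lemma infinite_inter_of_mem_closure_of_notMem {X : Type u} [TopologicalSpace X] [T1Space X]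
    {C U : Set X} {z : X} (hzC : z ∈ closure C) (hz : z ∉ C) (hU : U ∈ 𝓝 z) :
    (U ∩ C).Infinite := fun hfin => by
  have hW : U ∩ (U ∩ C)ᶜ ∈ 𝓝 z := inter_mem hU (hfin.isClosed.compl_mem_nhds fun h => hz h.2)
  obtain ⟨y, ⟨hyU, hy⟩, hyC⟩ := mem_closure_iff_nhds.mp hzC _ hW
  exact hy ⟨hyU, hyC⟩

lemma exists_infinite_subset_converging_of_charAt_lt_pCard {X : Type u} [TopologicalSpace X]
    [T1Space X] {C : Set X} {z : X} (hC : C.Countable) (hzC : z ∈ closure C) (hz : z ∉ C)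
    (hchar : charAt X z < lift.{u} pCard) :
    ∃ C' ⊆ C, C'.Infinite ∧ ∀ V ∈ 𝓝 z, (C' \ V).Finite := by
  obtain ⟨f, hf⟩ := countable_iff_exists_injOn.mp hC
  obtain ⟨𝓑, h𝓑open, h𝓑base, h𝓑card⟩ := exists_nhds_base_mk_eq_charAt z
  have htrace : ∀ U : Set X, IsOpen U → z ∈ U → (U ∩ C).Infinite := fun U hU hzU =>
    infinite_inter_of_mem_closure_of_notMem hzC hz (hU.mem_nhds hzU)
  obtain ⟨I, hI, hIU⟩ := exists_infinite_pseudoIntersection_of_mk_lt_pCard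
    (fun U : 𝓑 => f '' (U ∩ C)) (h𝓑card ▸ hchar) fun t => by
      have hopen : IsOpen (⋂ U ∈ t, (U : Set X)) :=
        isOpen_biInter_finset fun U _ => (h𝓑open U U.2).1
      have hmem : z ∈ ⋂ U ∈ t, (U : Set X) := mem_iInter₂.mpr fun U _ => (h𝓑open U U.2).2
      refine ((htrace _ hopen hmem).image (hf.mono inter_subset_right)).mono ?_
      rintro _ ⟨x, ⟨hxU, hxC⟩, rfl⟩
      exact mem_iInter₂.mpr fun U hU => ⟨x, ⟨mem_iInter₂.mp hxU U hU, hxC⟩, rfl⟩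
  refine ⟨C ∩ f ⁻¹' I, inter_subset_left, ?_, fun V hV => ?_⟩
  · obtain ⟨U, hU, -⟩ := h𝓑base univ isOpen_univ (mem_univ z)
    have hIS : (I ∩ f '' (U ∩ C)).Infinite := by
      simpa [sdiff_sdiff_right_self] using hI.sdiff (hIU ⟨U, hU⟩)
    refine fun hfin => hIS ((hfin.image f).subset ?_)
    rintro _ ⟨hxI, x, ⟨-, hxC⟩, rfl⟩
    exact ⟨x, ⟨hxC, hxI⟩, rfl⟩
  · obtain ⟨V', hV'V, hV'open, hzV'⟩ := mem_nhds_iff.mp hV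
    obtain ⟨U, hU, hUV'⟩ := h𝓑base V' hV'open hzV'
    refine Finite.of_finite_image ((hIU ⟨U, hU⟩).subset ?_) (hf.mono fun x hx => hx.1.1)
    rintro _ ⟨x, ⟨⟨hxC, hxI⟩, hxV⟩, rfl⟩
    refine ⟨hxI, ?_⟩
    rintro ⟨y, ⟨hyU, hyC⟩, hfy⟩
    exact hxV (hV'V (hUV' (hf hyC hxC hfy ▸ hyU)))

lemma mem_of_mem_isolatedPoints_of_mem_closure {X : Type*} [TopologicalSpace X] {s : Set X}
    {x : X} (hx : x ∈ isolatedPoints X) (hxs : x ∈ closure s) : x ∈ s := by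
  obtain ⟨y, rfl, hy⟩ := mem_closure_iff.mp hxs {x} hx rfl
  exact hy

lemma countable_isolatedPoints (X : Type*) [TopologicalSpace X]
    [TopologicalSpace.SeparableSpace X] : (isolatedPoints X).Countable :=
  (pairwiseDisjoint_singleton' _).countable_of_isOpen (fun _ hx => hx)
    fun x _ => singleton_nonempty x

lemma Equiv.Perm.mapsTo_of_forall_notMem_eq {X : Type*} {S : Set X} {f : Equiv.Perm X}
    (hf : ∀ x ∉ S, f x = x) : MapsTo f S S := fun x hx => by
  by_contra hfx
  rw [f.injective (hf _ hfx)] at hfx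
  exact hfx hx

lemma Equiv.Perm.continuous_of_forall_notMem_eq {X : Type*} [TopologicalSpace X] [T2Space X]
    {S : Set X} {z : X} (hS : S ⊆ isolatedPoints X) (hSz : ∀ V ∈ 𝓝 z, (S \ V).Finite)
    {f : Equiv.Perm X} (hf : ∀ x ∉ S, f x = x) : Continuous f := by
  refine continuous_iff_continuousAt.mpr fun y => ?_
  by_cases hyS : y ∈ S
  · rw [ContinuousAt, (isOpen_singleton_iff_nhds_eq_pure y).mp (hS hyS)]
    exact tendsto_pure_nhds f y
  refine fun V hV => mem_map.mpr ?_
  rw [hf y hyS] at hV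
  suffices ∃ W ∈ 𝓝 y, W ∩ S ⊆ f ⁻¹' V by
    obtain ⟨W, hW, hWS⟩ := this
    filter_upwards [hV, hW] with x hxV hxW
    by_cases hxS : x ∈ S
    · exact hWS ⟨hxW, hxS⟩
    · rwa [mem_preimage, hf x hxS]
  by_cases hyz : y = z
  · subst hyz
    have hfin : (S \ f ⁻¹' V).Finite :=
      ((hSz V hV).preimage f.injective.injOn).subset fun x hx =>
        ⟨Equiv.Perm.mapsTo_of_forall_notMem_eq hf hx.1, hx.2⟩
    exact ⟨(S \ f ⁻¹' V)ᶜ, hfin.isClosed.compl_mem_nhds fun h => hyS h.1,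
      fun x ⟨hx, hxS⟩ => by_contra fun hxV => hx ⟨hxS, hxV⟩⟩
  · obtain ⟨Uy, Uz, hUy, hUz, hyUy, hzUz, hdisj⟩ := t2_separation hyz
    have hfin : (Uy ∩ S).Finite := (hSz Uz (hUz.mem_nhds hzUz)).subset fun x ⟨hxy, hxS⟩ =>
      ⟨hxS, disjoint_left.mp hdisj hxy⟩
    refine ⟨Uy ∩ (Uy ∩ S)ᶜ, inter_mem (hUy.mem_nhds hyUy)
      (hfin.isClosed.compl_mem_nhds fun h => hyS h.2), ?_⟩
    rintro x ⟨⟨hxUy, hx⟩, hxS⟩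
    exact absurd ⟨hxUy, hxS⟩ hx

lemma exists_perm_swap_of_disjoint {X : Type*} {P Q : Set X} (hPQ : Disjoint P Q) (e : P ≃ Q) :
    ∃ f : Equiv.Perm X, (∀ x ∉ P ∪ Q, f x = x) ∧ ∀ x : P, f x = e x := by
  classical
  let swap : Equiv.Perm ↥(P ∪ Q) := (Equiv.Set.union hPQ).trans
    (((e.sumCongr e.symm).trans (Equiv.sumComm _ _)).trans (Equiv.Set.union hPQ).symm)
  refine ⟨Equiv.Perm.subtypeCongr swap (Equiv.refl _), fun x hx => ?_, fun x => ?_⟩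
  · simp [Equiv.Perm.subtypeCongr.right_apply _ _ hx]
  · rw [Equiv.Perm.subtypeCongr.apply, dif_pos (mem_union_left Q x.2)]
    simp [swap, Equiv.Set.union_apply_left hPQ (a := ⟨x, Or.inl x.2⟩) x.2]

lemma exists_homeomorph_swap_of_converging {X : Type*} [TopologicalSpace X] [T2Space X]
    [TopologicalSpace.SeparableSpace X] {P Q : Set X} {z : X} (hPQ : Disjoint P Q)
    (hiso : P ∪ Q ⊆ isolatedPoints X) (hPinf : P.Infinite) (hQinf : Q.Infinite)
    (hPz : ∀ V ∈ 𝓝 z, (P \ V).Finite) (hQz : ∀ V ∈ 𝓝 z, (Q \ V).Finite) :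
    ∃ h : X ≃ₜ X, (∀ x ∉ P ∪ Q, h x = x) ∧ MapsTo h P Q := by
  have hPQz : ∀ V ∈ 𝓝 z, ((P ∪ Q) \ V).Finite := fun V hV => by
    simpa [union_sdiff_distrib] using (hPz V hV).union (hQz V hV)
  have hcount := (countable_isolatedPoints X).mono hiso
  have := (hcount.mono subset_union_left).to_subtype
  have := (hcount.mono subset_union_right).to_subtype
  have := hPinf.to_subtype
  have := hQinf.to_subtype
  obtain ⟨e⟩ : Nonempty (P ≃ Q) := inferInstance
  obtain ⟨f, hf_fix, hf_e⟩ := exists_perm_swap_of_disjoint hPQ e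
  refine ⟨{ toEquiv := f
            continuous_toFun := f.continuous_of_forall_notMem_eq hiso hPQz hf_fix
            continuous_invFun := f⁻¹.continuous_of_forall_notMem_eq hiso hPQz
              fun x hx => Equiv.Perm.inv_eq_iff_eq.mpr (hf_fix x hx).symm },
    hf_fix, fun x hx => ?_⟩
  exact (hf_e ⟨x, hx⟩ ▸ (e ⟨x, hx⟩).2 : f x ∈ Q)

def Homeomorph.permIsolatedPoints {X : Type*} [TopologicalSpace X] (h : X ≃ₜ X) :
    Equiv.Perm (isolatedPoints X) :=
  h.toEquiv.subtypeEquiv fun x => by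
    show IsOpen {x} ↔ IsOpen {h x}
    rw [← h.isOpen_image, image_singleton]

lemma Homeomorph.permIsolatedPoints_mem_homeoPerms {X : Type*} [TopologicalSpace X]
    (h : X ≃ₜ X) (hfix : ∀ z ∉ isolatedPoints X, h z = z) :
    h.permIsolatedPoints ∈ homeoPerms X :=
  ⟨h, hfix, fun _ => rfl⟩

/-- Every separable compactification of character `< 𝔭` is soft. -/
theorem statement13 (K : Type u) [TopologicalSpace K] [TopologicalSpace.SeparableSpace K]
    (hK : IsCompactification K)
    (hchar : spaceChar K < Cardinal.lift.{u} pCard) : IsSoft K := by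
  obtain ⟨-, _, -⟩ := hK
  rintro A B hAB ⟨z, hzA, hzB⟩
  have hz : z ∉ isolatedPoints K := fun hz => by
    obtain ⟨a, haA, rfl⟩ := mem_of_mem_isolatedPoints_of_mem_closure hz hzA
    obtain ⟨b, hbB, hba⟩ := mem_of_mem_isolatedPoints_of_mem_closure hz hzB
    exact disjoint_left.mp hAB haA (Subtype.ext hba ▸ hbB)
  have hconverging : ∀ C : Set (isolatedPoints K), z ∈ closure (Subtype.val '' C) →
      ∃ P ⊆ Subtype.val '' C, P.Infinite ∧ ∀ V ∈ 𝓝 z, (P \ V).Finite := fun C hzC =>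
    exists_infinite_subset_converging_of_charAt_lt_pCard
      ((countable_isolatedPoints K).mono (Subtype.coe_image_subset _ _)) hzC
      (fun ⟨x, _, hx⟩ => hz (hx ▸ x.2)) ((le_ciSup bddAbove_of_small z).trans_lt hchar)
  obtain ⟨P, hPA, hPinf, hPz⟩ := hconverging A hzA
  obtain ⟨Q, hQB, hQinf, hQz⟩ := hconverging B hzB
  have hiso : P ∪ Q ⊆ isolatedPoints K := union_subset
    (hPA.trans (Subtype.coe_image_subset _ _)) (hQB.trans (Subtype.coe_image_subset _ _))
  obtain ⟨h, hfix, hPQ⟩ := exists_homeomorph_swap_of_converging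
    (((disjoint_image_iff Subtype.val_injective).mpr hAB).mono hPA hQB) hiso hPinf hQinf hPz hQz
  refine ⟨h.permIsolatedPoints,
    h.permIsolatedPoints_mem_homeoPerms fun y hy => hfix y fun hyPQ => hy (hiso hyPQ), ?_⟩
  refine (hPinf.preimage (hPA.trans (image_subset_range _ _))).mono fun x hx => ⟨?_, ?_⟩
  · exact Subtype.val_injective.mem_set_image.mp (hPA hx)
  · exact Subtype.val_injective.mem_set_image.mp (hQB (hPQ hx))
end

section
/- Let K be a compactification containing two disjoint sets A, B ⊆ K' whose closures in K intersect and such that for any infinite sets I ⊆ A and J ⊆ B with cl(I) \ I = cl(J) \ J, the subspaces cl(I) and cl(J) of K are not homeomorphic. Then the compactification K is not soft. If moreover A ∪ B = K', then K is not 𝟚-soft, where 𝟚 = {0,1} with the {0,1}-valued metric. -/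
open Set Filter Topology

universe u u₁ u₂ v w

/-!
A homeomorphism `h` of `K` fixing `K \ K'` pointwise and inducing `σ` on `K'` maps `cl(I)`
homeomorphically onto `cl(σ I)`, and it fixes the remainder `cl(I) \ I`, which consists of
non-isolated points; so `cl(σ I) \ σ I = cl(I) \ I`. Hence the hypothesis forces every
`σ ∈ G_{K',K}` to move only finitely many points of `A` into `B`, which contradicts softness.
For `𝟚`-softness take `φ = 0` on `A` and `1` elsewhere: it oscillates at a common point of the
closures, and when `A ∪ B = K'` the points whose value `σ` changes are moved from `A` to `B`
by `σ` or by `σ⁻¹`.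
-/

section Compactification

variable {K : Type*} [TopologicalSpace K]

def ClosuresNonHomeomorphic (A B : Set (isolatedPoints K)) : Prop :=
  ∀ I J : Set (isolatedPoints K), I ⊆ A → J ⊆ B → I.Infinite → J.Infinite →
    closure (Subtype.val '' I) \ (Subtype.val '' I) =
      closure (Subtype.val '' J) \ (Subtype.val '' J) →
    ¬ Nonempty (closure (Subtype.val '' I) ≃ₜ closure (Subtype.val '' J))

lemma closure_diff_subset_compl_isolatedPoints (s : Set K) :
    closure s \ s ⊆ (isolatedPoints K)ᶜ := by
  rintro z ⟨hz, hzs⟩ hiso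
  obtain ⟨w, hwz, hws⟩ := mem_closure_iff.mp hz {z} hiso rfl
  rw [Set.mem_singleton_iff.mp hwz] at hws
  exact hzs hws

lemma closure_image_diff_image_of_forall_not_isolated_fixed (h : K ≃ₜ K)
    (hfix : ∀ z ∉ isolatedPoints K, h z = z) (s : Set K) :
    closure (h '' s) \ h '' s = closure s \ s := by
  rw [← h.image_closure, ← Set.image_sdiff h.injective,
    Set.image_congr fun z hz => hfix z (closure_diff_subset_compl_isolatedPoints s hz),
    Set.image_id']

lemma inv_mem_homeoPerms {σ : Equiv.Perm (isolatedPoints K)} (hσ : σ ∈ homeoPerms K) :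
    σ⁻¹ ∈ homeoPerms K := by
  obtain ⟨h, hfix, hmap⟩ := hσ
  refine ⟨h.symm, fun z hz => h.symm_apply_eq.mpr (hfix z hz).symm, fun x => ?_⟩
  rw [h.symm_apply_eq, hmap, Equiv.Perm.coe_inv, Equiv.apply_symm_apply]

lemma finite_setOf_mem_and_perm_mem {A B : Set (isolatedPoints K)}
    (hAB : ClosuresNonHomeomorphic A B) {σ : Equiv.Perm (isolatedPoints K)}
    (hσ : σ ∈ homeoPerms K) : {x | x ∈ A ∧ σ x ∈ B}.Finite := by
  obtain ⟨h, hfix, hmap⟩ := hσ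
  set S := {x | x ∈ A ∧ σ x ∈ B}
  refine Set.not_infinite.mp fun hS => ?_
  have himage : Subtype.val '' (σ '' S) = h '' (Subtype.val '' S) := by
    simp only [Set.image_image, hmap]
  refine hAB S (σ '' S) (fun x hx => hx.1) (Set.image_subset_iff.mpr fun x hx => hx.2) hS
    (hS.image σ.injective.injOn) ?_ ?_
  · rw [himage, closure_image_diff_image_of_forall_not_isolated_fixed h hfix]
  · rw [himage, ← h.image_closure]
    exact ⟨h.image _⟩

lemma finite_setOf_perm_mem_iff_not_mem {A B : Set (isolatedPoints K)}
    (hAB : ClosuresNonHomeomorphic A B) (hcover : A ∪ B = Set.univ)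
    {σ : Equiv.Perm (isolatedPoints K)} (hσ : σ ∈ homeoPerms K) :
    {x | ¬ (σ x ∈ A ↔ x ∈ A)}.Finite := by
  have hB : ∀ x, x ∉ A → x ∈ B := fun x hx =>
    (Set.eq_univ_iff_forall.mp hcover x).resolve_left hx
  refine ((finite_setOf_mem_and_perm_mem hAB hσ).union
    ((finite_setOf_mem_and_perm_mem hAB (inv_mem_homeoPerms hσ)).image ⇑σ⁻¹)).subset ?_
  intro x hx
  by_cases hxA : x ∈ A
  · exact Or.inl ⟨hxA, hB _ fun h => hx (iff_of_true h hxA)⟩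
  · refine Or.inr ⟨σ x, ⟨not_not.mp fun h => hx (iff_of_false h hxA), ?_⟩, ?_⟩ <;>
      simp [hB x hxA]

lemma oscAt_pos_of_mem_closure_inter {M : Type*} [MetricSpace M]
    {φ : isolatedPoints K → M} {A B : Set (isolatedPoints K)} {p q : M} (hpq : p ≠ q)
    (hφA : ∀ x ∈ A, φ x = p) (hφB : ∀ x ∈ B, φ x = q) {z : K}
    (hz : z ∈ closure (Subtype.val '' A) ∩ closure (Subtype.val '' B)) :
    0 < oscAt φ z := by
  refine (edist_pos.mpr hpq).trans_le (le_iInf₂ fun O hO => le_iInf fun hzO => ?_)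
  obtain ⟨_, haO, a, ha, rfl⟩ := mem_closure_iff.mp hz.1 O hO hzO
  obtain ⟨_, hbO, b, hb, rfl⟩ := mem_closure_iff.mp hz.2 O hO hzO
  exact Metric.edist_le_ediam_of_mem ⟨a, haO, hφA a ha⟩ ⟨b, hbO, hφB b hb⟩

end Compactification

theorem statement15_general (K : Type u) [TopologicalSpace K]
    (A B : Set ↥(isolatedPoints K)) (hAB : Disjoint A B)
    (hcl : (closure (Subtype.val '' A) ∩ closure (Subtype.val '' B)).Nonempty)
    (hne : ∀ I J : Set ↥(isolatedPoints K), I ⊆ A → J ⊆ B → I.Infinite → J.Infinite →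
      closure (Subtype.val '' I) \ (Subtype.val '' I) =
        closure (Subtype.val '' J) \ (Subtype.val '' J) →
      ¬ Nonempty (↥(closure (Subtype.val '' I)) ≃ₜ ↥(closure (Subtype.val '' J)))) :
    ¬ IsSoft K ∧ (A ∪ B = Set.univ → ¬ IsMSoft K ↥({0, 1} : Set ℝ)) := by
  refine ⟨fun hsoft => ?_, fun hcover hsoft => ?_⟩
  · obtain ⟨σ, hσ, hinf⟩ := hsoft A B hAB hcl
    exact hinf (finite_setOf_mem_and_perm_mem hne hσ)
  classical
  let zero : ({0, 1} : Set ℝ) := ⟨0, by simp⟩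
  let one : ({0, 1} : Set ℝ) := ⟨1, by simp⟩
  let φ : isolatedPoints K → ({0, 1} : Set ℝ) := fun x => if x ∈ A then zero else one
  have : Finite ({0, 1} : Set ℝ) := (Set.toFinite {0, 1}).to_subtype
  obtain ⟨z, hz⟩ := hcl
  have hosc : 0 < oscAt φ z :=
    oscAt_pos_of_mem_closure_inter (p := zero) (q := one) (by simp [zero, one, Subtype.ext_iff])
      (fun x hx => if_pos hx) (fun x hx => if_neg (hAB.notMem_of_mem_right hx)) hz
  obtain ⟨σ, hσ, ε, hε, hinf⟩ := hsoft φ (Set.toFinite _).isBounded ⟨z, hosc⟩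
  refine hinf ((finite_setOf_perm_mem_iff_not_mem hne hcover hσ).subset fun x hx hiff => ?_)
  have hφ : φ (σ x) = φ x := by simp only [φ, hiff]
  exact hε.not_ge (by simpa [hφ] using hx)

/-- If a compactification `K` contains disjoint sets `A, B ⊆ K'` with
intersecting closures such that no infinite `I ⊆ A`, `J ⊆ B` with
`cl(I) \ I = cl(J) \ J` have homeomorphic closures, then `K` is not soft; and if
moreover `A ∪ B = K'`, then `K` is not `𝟚`-soft. -/
theorem statement15 (K : Type u) [TopologicalSpace K] (hK : IsCompactification K)
    (A B : Set ↥(isolatedPoints K)) (hAB : Disjoint A B)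
    (hcl : (closure (Subtype.val '' A) ∩ closure (Subtype.val '' B)).Nonempty)
    (hne : ∀ I J : Set ↥(isolatedPoints K), I ⊆ A → J ⊆ B → I.Infinite → J.Infinite →
      closure (Subtype.val '' I) \ (Subtype.val '' I) =
        closure (Subtype.val '' J) \ (Subtype.val '' J) →
      ¬ Nonempty (↥(closure (Subtype.val '' I)) ≃ₜ ↥(closure (Subtype.val '' J)))) :
    ¬ IsSoft K ∧ (A ∪ B = Set.univ → ¬ IsMSoft K ↥({0, 1} : Set ℝ)) :=
  statement15_general K A B hAB hcl hne
end

section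
/- Let K be a compactification with G_{K',K} = FS_{K'}. Then K is equivalent to the Higson compactification of its permutation coarse space (K',𝓔_{K',K}) if and only if K is a Stone–Čech compactification of the discrete space K' (i.e., every bounded function K' → ℝ extends to a continuous function on K). -/
open Set Filter Topology

universe u u₁ u₂ v w

/-! When `G_{K',K} = FS_{K'}`, every entourage of the permutation coarse structure has
singleton balls off a finite set, and finite sets are bounded, so every function on `K'` is
slowly oscillating: `so(K', 𝓔)` consists of all bounded functions. Evaluation at `φ` is then a
continuous extension of `φ` to the Higson compactification. Conversely, if every bounded
function extends to `K`, the extensions map `K` continuously into `ℝ^{so}`; the map is injective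
by Urysohn's lemma and has image the closure of `δ(K')` by compactness and density, so it is a
homeomorphism onto the Higson compactification. -/

open Function

section PermCoarse

variable {X : Type u} {S : Set (Equiv.Perm X)}

lemma permEnt_mem_permCoarse {F : Finset (Equiv.Perm X)} (hF : (F : Set (Equiv.Perm X)) ⊆ S) :
    permEnt (F : Set (Equiv.Perm X)) ∈ permCoarse S :=
  ⟨fun _ => Or.inl rfl, F, hF, subset_rfl⟩

lemma finite_setOf_swap_apply_ne [DecidableEq X] (a b : X) : {x | Equiv.swap a b x ≠ x}.Finite :=
  (toFinite {a, b}).subset fun x hx => by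
    by_contra hab
    simp only [mem_insert_iff, mem_singleton_iff, not_or] at hab
    exact hx (Equiv.swap_apply_of_ne_of_ne hab.1 hab.2)

/-- `B` lies in the ball around `x₀` of the entourage given by the swaps `(x₀ b)`, `b ∈ B`. -/
lemma isBoundedSet_permCoarse_of_finite [DecidableEq X] (hswap : ∀ a b : X, Equiv.swap a b ∈ S)
    (x₀ : X) {B : Set X} (hB : B.Finite) : IsBoundedSet (permCoarse S) B := by
  classical
  let F := hB.toFinset.image (Equiv.swap x₀)
  have hFS : (F : Set (Equiv.Perm X)) ⊆ S := by
    intro g hg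
    obtain ⟨b, -, rfl⟩ := Finset.mem_image.mp hg
    exact hswap x₀ b
  refine ⟨_, permEnt_mem_permCoarse hFS, x₀, fun b hb => Or.inr ⟨Equiv.swap x₀ b, ?_, ?_⟩⟩
  · exact Finset.mem_image_of_mem _ (hB.mem_toFinset.mpr hb)
  · exact (Equiv.swap_apply_left x₀ b).symm

lemma entBall_subset_singleton {E : Set (X × X)} {F : Set (Equiv.Perm X)} (hE : E ⊆ permEnt F)
    {x : X} (hx : ∀ g ∈ F, g x = x) : entBall E x ⊆ {x} := by
  intro y hy
  rcases hE hy with h | ⟨g, hg, h⟩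
  · exact h
  · exact h.trans (hx g hg)

/-- Off the union of the supports of the finitely many permutations defining an entourage,
its balls are singletons. -/
lemma slowlyOscillating_permCoarse [DecidableEq X] [Nonempty X] {M : Type v} [MetricSpace M]
    (hfin : ∀ g ∈ S, {x | g x ≠ x}.Finite) (hswap : ∀ a b : X, Equiv.swap a b ∈ S)
    (φ : X → M) : SlowlyOscillating (permCoarse S) φ := by
  intro ε hε E ⟨_, F, hFS, hEF⟩
  set B := ⋃ g ∈ (F : Set (Equiv.Perm X)), {x | g x ≠ x}
  have hB : B.Finite := F.finite_toSet.biUnion fun g hg => hfin g (hFS hg)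
  refine ⟨B, isBoundedSet_permCoarse_of_finite hswap (Classical.arbitrary X) hB, fun x hx => ?_⟩
  have hfix : ∀ g ∈ (F : Set (Equiv.Perm X)), g x = x := fun g hg => by
    by_contra hgx
    exact hx (mem_biUnion hg hgx)
  have hsub : (φ '' entBall E x).Subsingleton :=
    ((subsingleton_singleton).anti (entBall_subset_singleton hEF hfix)).image φ
  show Metric.ediam _ < _
  rw [hsub.ediam_eq]
  exact ENNReal.ofReal_pos.mpr hε

end PermCoarse

section Compactification

variable {K : Type w} [TopologicalSpace K]

lemma soSet_subset_ucHComp {X : Type u} {M : Type v} [MetricSpace M]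
    (𝓔 : Set (Set (X × X))) : soSet 𝓔 M ⊆ ucHComp 𝓔 M :=
  fun φ hφ => ⟨fun p => p.1 ⟨φ, hφ⟩, (continuous_apply _).comp continuous_subtype_val,
    fun _ => rfl⟩

lemma ucHComp_subset_ucSet {M : Type v} [MetricSpace M]
    {𝓔 : Set (Set (isolatedPoints K × isolatedPoints K))} (h : K ≃ₜ HComp 𝓔 M)
    (hh : ∀ x : isolatedPoints K, h x.val = deltaEmb 𝓔 M x) : ucHComp 𝓔 M ⊆ ucSet K M := by
  rintro φ ⟨f, hf, hfφ⟩
  exact ⟨f ∘ h, hf.comp h.continuous, fun x => by simp only [comp_apply, hh, hfφ]⟩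

lemma Continuous.range_eq_closure_image_of_dense {Y : Type*} [TopologicalSpace Y]
    [CompactSpace K] [T2Space Y] {H : K → Y} (hH : Continuous H) {D : Set K} (hD : Dense D) :
    range H = closure (H '' D) := by
  rw [hH.isClosedMap.closure_image_eq_of_continuous hH, hD.closure_eq, image_univ]

/-- The chosen extensions embed `K` into `ℝ^{so}`, with image the closure of `δ(K')`. -/
theorem exists_homeomorph_hComp (hK : IsCompactification K)
    {𝓔 : Set (Set (isolatedPoints K × isolatedPoints K))} (hext : soSet 𝓔 ℝ ⊆ ucSet K ℝ)
    (hsep : ∀ z w : K, z ≠ w → ∃ f : K → ℝ, Continuous f ∧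
      (fun x : isolatedPoints K => f x) ∈ soSet 𝓔 ℝ ∧ f z ≠ f w) :
    ∃ h : K ≃ₜ HComp 𝓔 ℝ, ∀ x : isolatedPoints K, h x.val = deltaEmb 𝓔 ℝ x := by
  obtain ⟨_, _, hdense⟩ := hK
  choose ext hcont hres using fun ψ : soSet 𝓔 ℝ => hext ψ.2
  let H : K → (soSet 𝓔 ℝ → ℝ) := fun z ψ => ext ψ z
  have hH : Continuous H := continuous_pi hcont
  have hHδ : ∀ x : isolatedPoints K, H x = deltaMap 𝓔 ℝ x := fun x => funext fun ψ => hres ψ x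
  have hrange : range H = hCompSet 𝓔 ℝ := by
    rw [hH.range_eq_closure_image_of_dense hdense, image_eq_range, hCompSet]
    exact congrArg (fun s => closure (range s)) (funext hHδ)
  have hinj : Injective H := by
    intro z w hzw
    by_contra hne
    obtain ⟨f, hf, hfso, hfzw⟩ := hsep z w hne
    have hext_f : ext ⟨_, hfso⟩ = f :=
      (hcont _).ext_on hdense hf fun a ha => hres ⟨_, hfso⟩ ⟨a, ha⟩
    exact hfzw (by simpa only [H, hext_f] using congrFun hzw ⟨_, hfso⟩)
  let H' : K → HComp 𝓔 ℝ := codRestrict H _ fun z => hrange ▸ mem_range_self z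
  have hH' : Continuous H' := hH.codRestrict _
  have hsurj : Surjective H' := by
    rintro ⟨p, hp⟩
    obtain ⟨z, rfl⟩ := hrange.symm ▸ hp
    exact ⟨z, rfl⟩
  refine ⟨(hH'.isClosedEmbedding (injective_codRestrict _ |>.mpr hinj)).isEmbedding
    |>.toHomeomorphOfSurjective hsurj, fun x => Subtype.ext (hHδ x)⟩

end Compactification

/-- A compactification `K` with `G_{K',K} = FS_{K'}` is equivalent to the
Higson compactification of its permutation coarse space iff every bounded function
`K' → ℝ` extends to a continuous function on `K` (i.e. `K` is a Stone–Čech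
compactification of the discrete space `K'`). -/
theorem statement16 (K : Type u) [TopologicalSpace K] (hK : IsCompactification K)
    (hfs : homeoPerms K =
      {σ : Equiv.Perm ↥(isolatedPoints K) | {x : ↥(isolatedPoints K) | σ x ≠ x}.Finite}) :
    (∃ h : K ≃ₜ HComp (permCoarse (homeoPerms K)) ℝ,
        ∀ x : ↥(isolatedPoints K), h x.val = deltaEmb (permCoarse (homeoPerms K)) ℝ x) ↔
      (∀ φ : ↥(isolatedPoints K) → ℝ, Bornology.IsBounded (Set.range φ) →
        ∃ f : K → ℝ, Continuous f ∧ ∀ x : ↥(isolatedPoints K), f x.val = φ x) := by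
  classical
  have hfin : ∀ g ∈ homeoPerms K, {x | g x ≠ x}.Finite := fun g hg => by rwa [hfs] at hg
  have hswap : ∀ a b, Equiv.swap a b ∈ homeoPerms K := fun a b => by
    rw [hfs]
    exact finite_setOf_swap_apply_ne a b
  have : CompactSpace K := hK.1
  have : T2Space K := hK.2.1
  constructor
  · rintro ⟨h, hh⟩ φ hφ
    cases isEmpty_or_nonempty (isolatedPoints K)
    · exact ⟨0, continuous_const, isEmptyElim⟩
    · exact ucHComp_subset_ucSet h hh <|
        soSet_subset_ucHComp _ ⟨hφ, slowlyOscillating_permCoarse hfin hswap φ⟩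
  · intro hext
    refine exists_homeomorph_hComp hK (fun φ hφ => hext φ hφ.1) fun z w hzw => ?_
    have : Nonempty K := ⟨z⟩
    have : Nonempty (isolatedPoints K) := hK.2.2.nonempty.to_subtype
    obtain ⟨f, hfz, hfw, -⟩ := exists_continuous_zero_one_of_isClosed isClosed_singleton
      isClosed_singleton (disjoint_singleton.mpr hzw)
    have hbdd : Bornology.IsBounded (range fun x : isolatedPoints K => f x) :=
      (isCompact_range f.continuous).isBounded.subset (range_comp_subset_range _ f)
    refine ⟨f, f.continuous, ⟨hbdd, slowlyOscillating_permCoarse hfin hswap _⟩, ?_⟩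
    simp [hfz rfl, hfw rfl]
end
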